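/- The open diagonal lies in the stable manifold of the fixed point p* := ((3−√5)/2, (3−√5)/2): with f(t) := (1−t)/(2−t), one has F(x,x) = (f(x), f(x)) for every 0 < x < 1, the point x* := (3−√5)/2 is the unique fixed point of f in [0,1], the iterates fⁿ(x) converge to x* for every x ∈ [0,1], and consequently Fⁿ(x,x) → p* as n → ∞ for every 0 < x < 1. -/
import Mathlib


open Set Filter Topology

/-- The minimal RS flip-flop map. -/
noncomputable def F (p : ℝ × ℝ) : ℝ × ℝ :=
  (p.2 * (1 - p.1) / (p.1 + p.2 - p.1 * p.2),
   p.1 * (1 - p.2) / (p.1 + p.2 - p.1 * p.2))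

/-- The restriction of F to the diagonal. -/
noncomputable def f (t : ℝ) : ℝ := (1 - t) / (2 - t)

/-- The diagonal coordinate of the fixed point p*. -/
noncomputable def xstar : ℝ := (3 - Real.sqrt 5) / 2


lemma hs5 : (2:ℝ) ≤ Real.sqrt 5 ∧ Real.sqrt 5 ≤ 3 := by
  have h := Real.sq_sqrt (show (0:ℝ) ≤ 5 by norm_num)
  have h0 := Real.sqrt_nonneg 5
  constructor <;> nlinarith

lemma xstar_mem : xstar ∈ Icc (0:ℝ) (1/2) := by
  obtain ⟨h1, h2⟩ := hs5
  constructor <;> (unfold xstar; linarith)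

lemma xstar_eq : xstar ^ 2 - 3 * xstar + 1 = 0 := by
  have h := Real.sq_sqrt (show (0:ℝ) ≤ 5 by norm_num)
  unfold xstar
  nlinarith

lemma f_fixed : f xstar = xstar := by
  have h2 : (2:ℝ) - xstar ≠ 0 := by
    have := xstar_mem.2; intro h; linarith
  unfold f
  rw [div_eq_iff h2]
  nlinarith [xstar_eq]

lemma f_maps : ∀ x ∈ Icc (0:ℝ) 1, f x ∈ Icc (0:ℝ) (1/2) := by
  intro x ⟨h0, h1⟩
  have h2 : (0:ℝ) < 2 - x := by linarith
  constructor
  · exact div_nonneg (by linarith) (by linarith)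
  · rw [f, div_le_iff₀ h2]; linarith

lemma f_contr : ∀ a ∈ Icc (0:ℝ) (1/2), |f a - xstar| ≤ 4/9 * |a - xstar| := by
  intro a ⟨h0, h1⟩
  obtain ⟨hx0, hx1⟩ := xstar_mem
  have h2a : (0:ℝ) < 2 - a := by linarith
  have h2x : (0:ℝ) < 2 - xstar := by linarith
  have key : f a - xstar = (xstar - a) / ((2 - a) * (2 - xstar)) := by
    conv_lhs => rw [← f_fixed]
    unfold f
    field_simp
    ring
  have hD : (0:ℝ) < (2 - a) * (2 - xstar) := mul_pos h2a h2x
  rw [key, abs_div, abs_sub_comm xstar a, abs_of_pos hD, div_le_iff₀ hD]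
  have h9 : (9:ℝ)/4 ≤ (2 - a) * (2 - xstar) := by nlinarith
  nlinarith [abs_nonneg (a - xstar)]

lemma f_tendsto : ∀ x ∈ Icc (0:ℝ) 1, Tendsto (fun n : ℕ => f^[n] x) atTop (𝓝 xstar) := by
  intro x hx
  obtain ⟨hx0, hx1⟩ := hx
  obtain ⟨hs0, hs1⟩ := xstar_mem
  have claim : ∀ n : ℕ, f^[n] (f x) ∈ Icc (0:ℝ) (1/2) ∧
      |f^[n] (f x) - xstar| ≤ (4/9:ℝ)^n * (1/2) := by
    intro n
    induction n with
    | zero =>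
      simp only [Function.iterate_zero_apply, pow_zero, one_mul]
      have hm := f_maps x ⟨hx0, hx1⟩
      refine ⟨hm, ?_⟩
      rw [abs_le]; constructor <;> (obtain ⟨a, b⟩ := hm; linarith)
    | succ n ih =>
      obtain ⟨ihm, ihb⟩ := ih
      rw [Function.iterate_succ_apply']
      have hm2 : f^[n] (f x) ∈ Icc (0:ℝ) 1 := ⟨ihm.1, by linarith [ihm.2]⟩
      refine ⟨f_maps _ hm2, ?_⟩
      calc |f (f^[n] (f x)) - xstar| ≤ 4/9 * |f^[n] (f x) - xstar| := f_contr _ ihm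
        _ ≤ 4/9 * ((4/9:ℝ)^n * (1/2)) := by
            have : (0:ℝ) ≤ 4/9 := by norm_num
            nlinarith [ihb]
        _ = (4/9:ℝ)^(n+1) * (1/2) := by ring
  have bound : ∀ n : ℕ, ‖f^[n] x - xstar‖ ≤ (9/4:ℝ) * (4/9)^n := by
    intro n
    cases n with
    | zero =>
      simp only [Function.iterate_zero_apply, pow_zero, mul_one, Real.norm_eq_abs]
      rw [abs_le]; constructor <;> linarith
    | succ n =>
      rw [Function.iterate_succ_apply, Real.norm_eq_abs]
      calc |f^[n] (f x) - xstar| ≤ (4/9:ℝ)^n * (1/2) := (claim n).2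
        _ ≤ (9/4:ℝ) * (4/9)^(n+1) := by
            rw [pow_succ]
            nlinarith [pow_nonneg (show (0:ℝ) ≤ 4/9 by norm_num) n]
  have hgeo : Tendsto (fun n : ℕ => (9/4:ℝ) * (4/9)^n) atTop (𝓝 0) := by
    have := tendsto_pow_atTop_nhds_zero_of_lt_one (show (0:ℝ) ≤ 4/9 by norm_num)
      (show (4/9:ℝ) < 1 by norm_num)
    simpa using this.const_mul (9/4:ℝ)
  have := squeeze_zero_norm bound hgeo
  exact tendsto_sub_nhds_zero_iff.mp this

lemma F_diag : ∀ x ∈ Ioo (0:ℝ) 1, F (x, x) = (f x, f x) := by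
  intro x ⟨h0, h1⟩
  have hden : x + x - x * x ≠ 0 := by nlinarith
  have h2x : (2:ℝ) - x ≠ 0 := by intro h; linarith
  simp only [F, f, Prod.mk.injEq]
  constructor <;> (rw [div_eq_div_iff hden h2x]; ring)

lemma f_maps_open : ∀ x ∈ Ioo (0:ℝ) 1, f x ∈ Ioo (0:ℝ) 1 := by
  intro x ⟨h0, h1⟩
  have h2 : (0:ℝ) < 2 - x := by linarith
  constructor
  · exact div_pos (by linarith) h2
  · rw [f, div_lt_iff₀ h2]; linarith

/-- The open diagonal lies in the stable manifold of p*: F(x,x) = (f(x),f(x)) with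
f(t) = (1−t)/(2−t), x* = (3−√5)/2 is the unique fixed point of f in [0,1], the
iterates of f converge to x* on [0,1], and Fⁿ(x,x) → (x*,x*) for all 0 < x < 1. -/
theorem diagonal_in_stable_manifold :
    (∀ x ∈ Ioo (0:ℝ) 1, F (x, x) = (f x, f x)) ∧
    f xstar = xstar ∧
    (∀ x ∈ Icc (0:ℝ) 1, f x = x → x = xstar) ∧
    (∀ x ∈ Icc (0:ℝ) 1, Tendsto (fun n : ℕ => f^[n] x) atTop (𝓝 xstar)) ∧
    (∀ x ∈ Ioo (0:ℝ) 1,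
      Tendsto (fun n : ℕ => F^[n] (x, x)) atTop (𝓝 ((xstar, xstar) : ℝ × ℝ))) := by
  refine ⟨F_diag, f_fixed, ?_, f_tendsto, ?_⟩
  · intro x ⟨h0, h1⟩ hfx
    have h2 : (0:ℝ) < 2 - x := by linarith
    have hquad : x ^ 2 - 3 * x + 1 = 0 := by
      rw [f, div_eq_iff (ne_of_gt h2)] at hfx
      nlinarith
    have hfactor : (x - xstar) * (x + xstar - 3) = 0 := by
      linear_combination hquad - xstar_eq
    rcases mul_eq_zero.mp hfactor with h | h
    · linarith
    · obtain ⟨hs0, hs1⟩ := xstar_mem; linarith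
  · intro x hx
    have claim : ∀ n : ℕ, F^[n] (x, x) = (f^[n] x, f^[n] x) ∧ f^[n] x ∈ Ioo (0:ℝ) 1 := by
      intro n
      induction n with
      | zero => exact ⟨rfl, hx⟩
      | succ n ih =>
        obtain ⟨ih1, ih2⟩ := ih
        rw [Function.iterate_succ_apply', Function.iterate_succ_apply', ih1]
        exact ⟨F_diag _ ih2, f_maps_open _ ih2⟩
    have ht := f_tendsto x ⟨le_of_lt hx.1, le_of_lt hx.2⟩
    exact (ht.prodMk_nhds ht).congr fun n => ((claim n).1).symm
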